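/- arXiv:1806.07025 — 2 statements merged into one kernel-verified Lean document; each statement's English description precedes it below -/
import Mathlib

section
/- Under the hypotheses that X is a second-countable topological space and ⊕ : X → Y is a surjection admitting local continuous sections around every point (i.e., for every y ∈ Y there is an open neighborhood V and H : V → X with ⊕ ∘ H = id_V and H ∘ ⊕ continuous), the quotient topology on Y is second countable. -/
/-!
A local section `H : V → X` of the quotient map `op` is continuous, because `H ∘ op` is
continuous on the open saturated set `op ⁻¹' V`, and it is an embedding since `op ∘ H` is the
inclusion of `V`; hence each `V` is second countable as a subspace of `X`. The quotient `Y` is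
Lindelöf as a continuous image of `X`, so countably many of the `V` cover it, and a countable open
cover by second countable subspaces makes `Y` second countable.
-/

open Set Topology TopologicalSpace

theorem SecondCountableTopology.of_lindelofSpace_of_locally {Y : Type*} [TopologicalSpace Y]
    [LindelofSpace Y]
    (h : ∀ y : Y, ∃ V : Set Y, IsOpen V ∧ y ∈ V ∧ SecondCountableTopology V) :
    SecondCountableTopology Y := by
  choose V hVopen hmem hV using h
  obtain ⟨t, htc, hcover⟩ := countable_cover_nhds fun y => (hVopen y).mem_nhds (hmem y)
  have : Countable t := htc.to_subtype
  have (i : t) : SecondCountableTopology (V i) := hV i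
  exact secondCountableTopology_of_countable_cover (fun i : t => hVopen i)
    (by rwa [iUnion_subtype])

namespace Topology.IsQuotientMap

variable {X Y : Type*} [TopologicalSpace X] [TopologicalSpace Y] {op : X → Y} {V : Set Y}
  {H : Y → X}

theorem isInducing_domRestrict_of_section (hop : IsQuotientMap op) (hV : IsOpen V)
    (hsec : ∀ v ∈ V, op (H v) = v) (hHcont : ContinuousOn (H ∘ op) (op ⁻¹' V)) :
    IsInducing (V.domRestrict H) := by
  refine .of_comp (((hop.continuousOn_isOpen_iff hV).2 hHcont).domRestrict) hop.continuous ?_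
  convert IsInducing.subtypeVal (t := V)
  ext v
  exact hsec v v.2

theorem secondCountableTopology_of_section [SecondCountableTopology X] (hop : IsQuotientMap op)
    (hV : IsOpen V) (hsec : ∀ v ∈ V, op (H v) = v)
    (hHcont : ContinuousOn (H ∘ op) (op ⁻¹' V)) : SecondCountableTopology V :=
  (hop.isInducing_domRestrict_of_section hV hsec hHcont).secondCountableTopology

end Topology.IsQuotientMap

/-- If `X` is second countable and `op : X → Y` is a surjection
admitting local continuous sections around every point, then the quotient topology
on `Y` is second countable. -/
theorem stmt_3 {X Y : Type*} [tX : TopologicalSpace X] [tY : TopologicalSpace Y]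
    [SecondCountableTopology X]
    (op : X → Y) (hop : Function.Surjective op)
    (htY : tY = TopologicalSpace.coinduced op tX)
    (hsec : ∀ y : Y, ∃ V : Set Y, IsOpen V ∧ y ∈ V ∧ ∃ H : Y → X,
      (∀ v ∈ V, op (H v) = v) ∧ ContinuousOn (fun x => H (op x)) (op ⁻¹' V)) :
    SecondCountableTopology Y := by
  have hquot : IsQuotientMap op := ⟨⟨htY⟩, hop⟩
  have : LindelofSpace Y := .of_continuous_surjective hquot.continuous hop
  refine .of_lindelofSpace_of_locally fun y => ?_
  obtain ⟨V, hVopen, hyV, H, hHsec, hHcont⟩ := hsec y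
  exact ⟨V, hVopen, hyV, hquot.secondCountableTopology_of_section hVopen hHsec hHcont⟩
end

section
/- Let X be second countable and metrizable, ⊕ : X → Y surjective admitting local continuous sections at every point, and assume in addition that the quotient topology T_⊕ on Y is regular in the sense that every point of an open set W has an open neighborhood L with closure contained in W. Then the quotient topology T_⊕ on Y is metrizable. -/
/-!
Each local section `H` over an open set `V` is continuous on `V` (because `op` restricts to a
quotient map over `V`), and `op ∘ H = id` on `V` makes it an embedding of `V` into `X`. So the
sets `V` are second countable and T0. Countably many of them cover `Y`, which is Lindelöf as a
continuous image of `X`; hence `Y` is second countable, T0 and regular, and Urysohn's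
metrization theorem applies.
-/

open Set Topology TopologicalSpace

theorem Topology.IsQuotientMap.continuousOn_of_comp {X Y Z : Type*} [TopologicalSpace X]
    [TopologicalSpace Y] [TopologicalSpace Z] {q : X → Y} (hq : IsQuotientMap q) {V : Set Y}
    (hV : IsOpen V) {H : Y → Z} (hH : ContinuousOn (H ∘ q) (q ⁻¹' V)) : ContinuousOn H V := by
  rw [continuousOn_iff_continuous_domRestrict] at hH ⊢
  exact (hq.restrictPreimage_isOpen hV).continuous_iff.2 hH

theorem Topology.isEmbedding_domRestrict_of_leftInvOn {X Y : Type*} [TopologicalSpace X]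
    [TopologicalSpace Y] {q : X → Y} (hq : Continuous q) {V : Set Y} {H : Y → X}
    (hsec : LeftInvOn q H V) (hH : ContinuousOn H V) : IsEmbedding (V.domRestrict H) := by
  refine .of_comp (continuousOn_iff_continuous_domRestrict.1 hH) hq ?_
  have : q ∘ V.domRestrict H = Subtype.val := funext fun v => hsec v.2
  exact this ▸ IsEmbedding.subtypeVal

theorem RegularSpace.of_forall_isOpen_exists_closure_subset {Y : Type*} [TopologicalSpace Y]
    (h : ∀ W : Set Y, IsOpen W → ∀ z ∈ W, ∃ L : Set Y, IsOpen L ∧ z ∈ L ∧ closure L ⊆ W) :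
    RegularSpace Y := by
  refine .of_exists_mem_nhds_isClosed_subset fun z s hs => ?_
  obtain ⟨W, hWs, hWo, hzW⟩ := mem_nhds_iff.1 hs
  obtain ⟨L, hLo, hzL, hLW⟩ := h W hWo z hzW
  exact ⟨closure L, Filter.mem_of_superset (hLo.mem_nhds hzL) subset_closure, isClosed_closure,
    hLW.trans hWs⟩

theorem LindelofSpace.secondCountableTopology_of_isOpen_cover {Y : Type*} [TopologicalSpace Y]
    [LindelofSpace Y] {U : Y → Set Y} (hUo : ∀ y, IsOpen (U y)) (hyU : ∀ y, y ∈ U y)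
    [∀ y, SecondCountableTopology (U y)] : SecondCountableTopology Y := by
  obtain ⟨r, hrc, hr⟩ := isLindelof_univ.elim_countable_subcover U hUo
    fun y _ => mem_iUnion.2 ⟨y, hyU y⟩
  have : Countable r := hrc.to_subtype
  refine secondCountableTopology_of_countable_cover (fun i : r => hUo i) ?_
  rw [iUnion_coe_set]
  exact univ_subset_iff.1 hr

/-- If `X` is second countable and metrizable, `op : X → Y` is a
surjection admitting local continuous sections at every point, and the quotient
topology on `Y` is regular in the sense that every point of an open set `W` has an
open neighborhood `L` with `closure L ⊆ W`, then the quotient topology on `Y`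
is metrizable. -/
theorem stmt_5 {X Y : Type*} [tX : TopologicalSpace X] [tY : TopologicalSpace Y]
    [SecondCountableTopology X] [TopologicalSpace.MetrizableSpace X]
    (op : X → Y) (hop : Function.Surjective op)
    (htY : tY = TopologicalSpace.coinduced op tX)
    (hsec : ∀ y : Y, ∃ V : Set Y, IsOpen V ∧ y ∈ V ∧ ∃ H : Y → X,
      (∀ v ∈ V, op (H v) = v) ∧ ContinuousOn (fun x => H (op x)) (op ⁻¹' V))
    (hreg : ∀ W : Set Y, IsOpen W → ∀ z ∈ W, ∃ L : Set Y,
      IsOpen L ∧ z ∈ L ∧ closure L ⊆ W) :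
    TopologicalSpace.MetrizableSpace Y := by
  have hq : IsQuotientMap op := ⟨⟨htY⟩, hop⟩
  choose V hVo hyV H hHsec hHcont using hsec
  have hemb (y : Y) : IsEmbedding ((V y).domRestrict (H y)) :=
    isEmbedding_domRestrict_of_leftInvOn hq.continuous (hHsec y)
      (hq.continuousOn_of_comp (hVo y) (hHcont y))
  have (y : Y) : SecondCountableTopology (V y) := (hemb y).secondCountableTopology
  have : LindelofSpace Y := .of_continuous_surjective hq.continuous hop
  have : SecondCountableTopology Y := LindelofSpace.secondCountableTopology_of_isOpen_cover hVo hyV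
  have : T0Space Y := .of_open_cover fun y => ⟨V y, hyV y, hVo y, (hemb y).t0Space⟩
  have : RegularSpace Y := .of_forall_isOpen_exists_closure_subset hreg
  exact metrizableSpace_of_t3_secondCountable Y
end
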